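/- For all integers n ≥ k ≥ 1, the partial Bell polynomial satisfies B_{n,k}(1/2, 1/3, ..., 1/(n−k+2)) = (n!/(n+k)!) · Σ_{i=0}^{k} (−1)^{k−i} · C(n+k, k−i) · S(n+i, i), where S denotes Stirling numbers of the second kind. -/

import Mathlib

open Finset

/-- Stirling numbers of the second kind `S(n,k)`. -/
def stirling : ℕ → ℕ → ℕ
  | 0, 0 => 1
  | 0, _ + 1 => 0
  | _ + 1, 0 => 0
  | n + 1, k + 1 => (k + 1) * stirling n (k + 1) + stirling n k

/-- The partial Bell polynomials `B_{n,k}(x₁, …, x_{n-k+1})`. -/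
noncomputable def bellPoly (n k : ℕ) (x : ℕ → ℝ) : ℝ :=
  ∑ l ∈ (Fintype.piFinset fun _ : Fin n => Finset.range (n + 1)) |>.filter
      (fun l => (∑ i, (i.1 + 1) * l i) = n ∧ (∑ i, l i) = k),
    (n.factorial : ℝ) / (∏ i, ((l i).factorial : ℝ)) *
      ∏ i, (x (i.1 + 1) / ((i.1 + 1).factorial : ℝ)) ^ l i

/-!
Since `xᵢ / i! = 1 / (i + 1)!`, the exponential generating series `∑ xᵢ tⁱ / i!` of the
arguments is `(eᵗ - 1 - t) / t`, so `B_{n,k}(x) = n!/k! [tⁿ] (∑ xᵢ tⁱ / i!)ᵏ` becomes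
`n!/k! [t^{n+k}] (eᵗ - 1 - t)ᵏ`. Expanding `((eᵗ - 1) - t)ᵏ` binomially and using
`[tᵐ] (eᵗ - 1)ʲ = j! S(m, j) / m!` gives the formula. That last identity holds because
`F j = (eᵗ - 1)ʲ` satisfies `F (j + 1)' = (j + 1) (F (j + 1) + F j)`, which on coefficients is
the recursion of `S`.
-/

open PowerSeries Nat

namespace PowerSeries

theorem coeff_pow_eq_of_coeff_eq {R : Type*} [CommSemiring R] {f g : R⟦X⟧} {n : ℕ}
    (h : ∀ m ≤ n, coeff m f = coeff m g) (k : ℕ) : coeff n (f ^ k) = coeff n (g ^ k) := by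
  have htrunc : trunc (n + 1) f = trunc (n + 1) g := by
    ext m
    simp only [coeff_trunc]
    split_ifs with hm
    · exact h m (Nat.lt_succ_iff.1 hm)
    · rfl
  rw [← coeff_coe_trunc_of_lt (Nat.lt_succ_self n), ← trunc_trunc_pow, htrunc, trunc_trunc_pow,
    coeff_coe_trunc_of_lt (Nat.lt_succ_self n)]

theorem coeff_sum_C_mul_X_pow_pow {R ι : Type*} [CommSemiring R] [DecidableEq ι]
    (s : Finset ι) (c : ι → R) (e : ι → ℕ) (n k : ℕ) :
    coeff n ((∑ i ∈ s, C (c i) * X ^ e i) ^ k) =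
      ∑ l ∈ (piAntidiag s k).filter (fun l => ∑ i ∈ s, e i * l i = n),
        multinomial s l * ∏ i ∈ s, c i ^ l i := by
  rw [sum_pow_eq_sum_piAntidiag, map_sum, sum_filter]
  refine sum_congr rfl fun l _ => ?_
  have hprod : ∏ i ∈ s, (C (c i) * X ^ e i) ^ l i =
      C (∏ i ∈ s, c i ^ l i) * X ^ ∑ i ∈ s, e i * l i := by
    simp only [mul_pow, prod_mul_distrib, map_prod, map_pow, ← pow_mul, prod_pow_eq_pow_sum]
  rw [hprod, ← map_natCast (C (R := R)), ← mul_assoc, ← map_mul, coeff_C_mul_X_pow]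
  simp only [eq_comm]

section ExpSubOne

variable {K : Type*} [Field K] [CharZero K]

theorem derivative_exp_sub_one_pow_succ (j : ℕ) :
    d⁄dX K ((exp K - 1) ^ (j + 1)) =
      (j + 1 : K) • ((exp K - 1) ^ (j + 1) + (exp K - 1) ^ j) := by
  rw [Derivation.leibniz_pow, map_sub, derivative_exp, Derivation.map_one_eq_zero, sub_zero,
    Nat.add_sub_cancel, smul_eq_mul, ← Nat.cast_smul_eq_nsmul K, Nat.cast_succ]
  ring_nf

theorem coeff_exp_sub_one_pow (m j : ℕ) :
    coeff m ((exp K - 1) ^ j) = (j ! * stirling m j / m ! : K) := by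
  induction m generalizing j with
  | zero => cases j <;> simp [stirling]
  | succ m ih =>
    cases j with
    | zero => simp [stirling]
    | succ j =>
      have h := congrArg (coeff m) (derivative_exp_sub_one_pow_succ (K := K) j)
      rw [coeff_derivative, map_smul, map_add, ih, ih, smul_eq_mul] at h
      rw [eq_div_of_mul_eq (Nat.cast_add_one_ne_zero m) h]
      have : (m ! : K) ≠ 0 := Nat.cast_ne_zero.2 (factorial_ne_zero m)
      simp only [stirling, factorial_succ]
      field_simp
      push_cast
      ring

theorem coeff_exp_sub_one_sub_X_pow (n k : ℕ) :
    coeff (n + k) ((exp K - 1 - X) ^ k) =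
      ∑ j ∈ range (k + 1),
        (-1) ^ (k - j) * k.choose j * (j ! * stirling (n + j) j / (n + j)! : K) := by
  rw [sub_eq_add_neg _ X, add_pow, map_sum]
  refine sum_congr rfl fun j hj => ?_
  have hjk : j ≤ k := Nat.lt_succ_iff.1 (mem_range.1 hj)
  have hterm : (exp K - 1) ^ j * (-X) ^ (k - j) * (k.choose j : K⟦X⟧) =
      C ((-1) ^ (k - j) * k.choose j : K) * ((exp K - 1) ^ j * X ^ (k - j)) := by
    rw [neg_pow, map_mul, map_pow, map_neg, map_one, map_natCast]
    ring
  rw [hterm, coeff_C_mul, coeff_mul_X_pow', if_pos (by omega),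
    show n + k - (k - j) = n + j by omega, coeff_exp_sub_one_pow]

end ExpSubOne

end PowerSeries

theorem bellPoly_eq_factorial_div_mul_coeff_pow (n k : ℕ) (x : ℕ → ℝ) :
    bellPoly n k x = n ! / k ! *
      coeff n ((∑ i : Fin n, C (x (i + 1) / (i + 1 : ℕ)!) * X ^ (i.1 + 1)) ^ k) := by
  have hsupp : (Fintype.piFinset fun _ : Fin n => range (n + 1)).filter
        (fun l => ∑ i, (i.1 + 1) * l i = n ∧ ∑ i, l i = k) =
      (piAntidiag univ k).filter (fun l => ∑ i, (i.1 + 1) * l i = n) := by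
    ext l
    simp only [mem_filter, Fintype.mem_piFinset, mem_range, mem_piAntidiag, mem_univ,
      implies_true, and_true]
    refine ⟨fun ⟨_, hn, hk⟩ => ⟨hk, hn⟩, fun ⟨hk, hn⟩ => ⟨fun i => ?_, hn, hk⟩⟩
    calc l i ≤ (i.1 + 1) * l i := Nat.le_mul_of_pos_left _ i.1.succ_pos
      _ ≤ ∑ j, (j.1 + 1) * l j :=
        single_le_sum (f := fun j : Fin n => (j.1 + 1) * l j) (fun j _ => Nat.zero_le _)
          (mem_univ i)
      _ < n + 1 := by omega
  rw [coeff_sum_C_mul_X_pow_pow, mul_sum, bellPoly, hsupp]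
  refine sum_congr rfl fun l hl => ?_
  have hk : ∑ i, l i = k := (mem_piAntidiag.1 (mem_filter.1 hl).1).1
  have hprod : (∏ i, ((l i)! : ℝ)) ≠ 0 := prod_ne_zero_iff.2 fun i _ => by positivity
  have hmultinomial : (multinomial univ l : ℝ) = k ! / ∏ i, ((l i)! : ℝ) := by
    rw [eq_div_iff hprod, ← hk, mul_comm]
    exact_mod_cast multinomial_spec univ l
  rw [hmultinomial]
  field_simp

theorem bellPoly_eq_factorial_div_mul_coeff_pow_of_coeff (n k : ℕ) (x : ℕ → ℝ)
    {F : ℝ⟦X⟧} (hF₀ : constantCoeff F = 0)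
    (hF : ∀ i < n, coeff (i + 1) F = x (i + 1) / (i + 1)!) :
    bellPoly n k x = n ! / k ! * coeff n (F ^ k) := by
  rw [bellPoly_eq_factorial_div_mul_coeff_pow, coeff_pow_eq_of_coeff_eq]
  intro m hm
  rw [Fin.sum_univ_eq_sum_range (fun i => C (x (i + 1) / (i + 1 : ℕ)!) * X ^ (i + 1)),
    map_sum]
  simp only [coeff_C_mul_X_pow]
  cases m with
  | zero => simp [hF₀]
  | succ m => simp [hF m (by omega), show m < n by omega]

theorem choose_mul_factorial_div_eq_choose_div_factorial {K : Type*} [Field K] [CharZero K]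
    (n : ℕ) {j k : ℕ} (hj : j ≤ k) :
    (k.choose j * j ! / (k ! * (n + j)!) : K) = (n + k).choose (k - j) / (n + k)! := by
  rw [Nat.cast_choose K hj, Nat.cast_choose K (by omega : k - j ≤ n + k),
    show n + k - (k - j) = n + j by omega]
  have hfactorial (m : ℕ) : (m ! : K) ≠ 0 := Nat.cast_ne_zero.2 (factorial_ne_zero m)
  field_simp [hfactorial]

theorem bellPoly_inv (n k : ℕ) :
    bellPoly n k (fun i => 1 / (i + 1 : ℝ)) =
      (n.factorial : ℝ) / ((n + k).factorial : ℝ) *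
        ∑ i ∈ Finset.range (k + 1),
          (-1 : ℝ) ^ (k - i) * ((n + k).choose (k - i) : ℝ) * (stirling (n + i) i : ℝ) := by
  obtain ⟨G, hG⟩ : X ∣ exp ℝ - 1 - X := X_dvd_iff.2 (by simp)
  have hGcoeff (m : ℕ) : coeff m G = coeff (m + 1) (exp ℝ - 1 - X) := by
    rw [hG, coeff_succ_X_mul]
  have hG₀ : constantCoeff G = 0 := by
    simp [← coeff_zero_eq_constantCoeff_apply, hGcoeff]
  have hGsucc (i : ℕ) : coeff (i + 1) G = 1 / ((i + 1 : ℕ) + 1 : ℝ) / (i + 1)! := by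
    rw [hGcoeff, map_sub, map_sub, coeff_exp, map_div₀, map_one, map_natCast, coeff_one, coeff_X,
      factorial_succ (i + 1)]
    field_simp
    push_cast
    ring
  have hshift : coeff n (G ^ k) = coeff (n + k) ((exp ℝ - 1 - X) ^ k) := by
    rw [hG, mul_pow, coeff_X_pow_mul']
    simp
  rw [bellPoly_eq_factorial_div_mul_coeff_pow_of_coeff n k _ hG₀ fun i _ => hGsucc i, hshift,
    coeff_exp_sub_one_sub_X_pow, mul_sum, mul_sum]
  refine sum_congr rfl fun j hj => ?_
  have hjk : j ≤ k := Nat.lt_succ_iff.1 (mem_range.1 hj)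
  linear_combination (n ! * (-1) ^ (k - j) * stirling (n + j) j : ℝ) *
    choose_mul_factorial_div_eq_choose_div_factorial (K := ℝ) n hjk
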